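/- Let A = [[1,0],[3,4]] and B = [[-1,0],[1,4]] be 2×2 integer matrices, let T² = ℝ²/ℤ² with covering p²: ℝ² → T², and define g = f_{2,A} and h(p²(t)) = {p²(f^1_{2,B}(t) + (1/4, 0)), p²(f^2_{2,B}(t) + (1/4, 0))}, where f^k_{2,M}(t) = (1/2)(Mt + k(1,1)). Then for every t ∈ ℝ², the four points p²(f^1_{2,A}(t)), p²(f^2_{2,A}(t)), p²(f^1_{2,B}(t) + (1/4,0)), p²(f^2_{2,B}(t) + (1/4,0)) are pairwise distinct; consequently g(x) ∩ h(x) = ∅ for all x ∈ T², and f(x) = g(x) ∪ h(x) defines a 4-valued map f: T² → D_4(T²) with partition f = {g, h}. -/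

import Mathlib

open Function Set

/-- The ordered configuration space of `n` points in `Y`. -/
def OrdConf (n : ℕ) (Y : Type*) [TopologicalSpace Y] : Type _ :=
  {y : Fin n → Y // Function.Injective y}

instance (n : ℕ) (Y : Type*) [TopologicalSpace Y] : TopologicalSpace (OrdConf n Y) :=
  instTopologicalSpaceSubtype

/-- Two ordered configurations are equivalent when they differ by a permutation. -/
def confSetoid (n : ℕ) (Y : Type*) [TopologicalSpace Y] : Setoid (OrdConf n Y) where
  r a b := ∃ σ : Equiv.Perm (Fin n), a.1 ∘ σ = b.1
  iseqv := by
    constructor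
    · intro a; exact ⟨Equiv.refl _, rfl⟩
    · rintro a b ⟨σ, h⟩
      refine ⟨σ.symm, funext fun i => ?_⟩
      have := congrFun h (σ.symm i)
      simpa using this.symm
    · rintro a b c ⟨σ, h1⟩ ⟨τ, h2⟩
      refine ⟨τ.trans σ, funext fun i => ?_⟩
      have h1' := congrFun h1 (τ i)
      have h2' := congrFun h2 i
      simp only [Function.comp_apply] at h1' h2' ⊢
      simp [Equiv.trans_apply, h1', h2']

/-- The unordered configuration space `D_n(Y)` of `n` points in `Y`,
with the quotient topology. -/
def UnordConf (n : ℕ) (Y : Type*) [TopologicalSpace Y] : Type _ :=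
  Quotient (confSetoid n Y)

instance (n : ℕ) (Y : Type*) [TopologicalSpace Y] : TopologicalSpace (UnordConf n Y) :=
  instTopologicalSpaceQuotient

/-- The underlying `n`-element subset of `Y` determined by an unordered configuration. -/
def UnordConf.values {n : ℕ} {Y : Type*} [TopologicalSpace Y] : UnordConf n Y → Set Y :=
  Quotient.lift (fun a => Set.range a.1) (by
    rintro a b ⟨σ, h⟩
    show Set.range a.1 = Set.range b.1
    rw [← h, Set.range_comp]
    simp)

/-- An `n`-valued map from `X` to `Y` is a continuous map `X → D_n(Y)`. -/
abbrev NValuedMap (X Y : Type*) [TopologicalSpace X] [TopologicalSpace Y] (n : ℕ) :=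
  C(X, UnordConf n Y)

/-- `g` is a submap of `f` when `g(x) ⊆ f(x)` for all `x`. -/
def IsSubmap {X Y : Type*} [TopologicalSpace X] [TopologicalSpace Y] {k n : ℕ}
    (g : NValuedMap X Y k) (f : NValuedMap X Y n) : Prop :=
  ∀ x : X, (g x).values ⊆ (f x).values

/-- An `n`-valued map is irreducible when it admits no proper (`k`-valued, `0 < k < n`) submap. -/
def IsIrreducibleNV {X Y : Type*} [TopologicalSpace X] [TopologicalSpace Y] {n : ℕ}
    (f : NValuedMap X Y n) : Prop :=
  ¬ ∃ (k : ℕ) (g : NValuedMap X Y k), 0 < k ∧ k < n ∧ IsSubmap g f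

/-- A partition of an `n`-valued map `f` into `l` multimaps:
a family of `kᵢ`-valued maps with `k₁ + ⋯ + k_l = n` whose values unite to those of `f`. -/
structure NVPartition {X Y : Type*} [TopologicalSpace X] [TopologicalSpace Y] {n : ℕ}
    (f : NValuedMap X Y n) (l : ℕ) where
  card : Fin l → ℕ
  card_pos : ∀ i, 0 < card i
  maps : ∀ i, NValuedMap X Y (card i)
  sum_card : ∑ i, card i = n
  values_eq : ∀ x : X, (f x).values = ⋃ i, UnordConf.values ((maps i) x)

/-- A partition is into irreducibles when every member is irreducible. -/
def NVPartition.IsIrreduciblePartition {X Y : Type*} [TopologicalSpace X] [TopologicalSpace Y]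
    {n : ℕ} {f : NValuedMap X Y n} {l : ℕ} (P : NVPartition f l) : Prop :=
  ∀ i, IsIrreducibleNV (P.maps i)

/-- A space is a (compact) finite polyhedron when it is homeomorphic to the underlying
space of a finite simplicial complex in some Euclidean space. -/
def IsFinitePolyhedron (X : Type*) [TopologicalSpace X] : Prop :=
  ∃ (N : ℕ) (K : Geometry.SimplicialComplex ℝ (EuclideanSpace ℝ (Fin N))),
    K.faces.Finite ∧ Nonempty (X ≃ₜ K.space)

/-- The `q`-torus `ℝ^q/ℤ^q`. -/
abbrev Torus (q : ℕ) := Fin q → AddCircle (1 : ℝ)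

/-- The universal covering projection `ℝ^q → T^q`, `t ↦ t mod 1`. -/
noncomputable def torusProj {q : ℕ} (t : Fin q → ℝ) : Torus q := fun i => (t i : AddCircle (1 : ℝ))

/-- The affine lift `f^k_{n,A}(t) = (1/n)(At + k·c)`, where `c = (1,…,1)`. -/
noncomputable def linLift {q : ℕ} (n : ℕ) (A : Matrix (Fin q) (Fin q) ℤ) (k : ℤ) (t : Fin q → ℝ) :
    Fin q → ℝ :=
  fun i => (1 / (n : ℝ)) * ((A.map (Int.cast : ℤ → ℝ)).mulVec t i + (k : ℝ))

/-- `f` is (a representative of) the linear `n`-valued torus map `f_{n,A}` induced by `A`: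
its value at `p^q(t)` is `{p^q(f^1_{n,A}(t)), …, p^q(f^n_{n,A}(t))}`. -/
def IsLinearNV {q : ℕ} (n : ℕ) (A : Matrix (Fin q) (Fin q) ℤ)
    (f : NValuedMap (Torus q) (Torus q) n) : Prop :=
  ∀ t : Fin q → ℝ,
    UnordConf.values (f (torusProj t)) =
      Set.range fun k : Fin n => torusProj (linLift n A ((k : ℕ) + 1) t)

/-- `f` has a proper partition: a partition into at least two multimaps. -/
def HasProperPartition {X Y : Type*} [TopologicalSpace X] [TopologicalSpace Y] {n : ℕ}
    (f : NValuedMap X Y n) : Prop :=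
  ∃ l : ℕ, 2 ≤ l ∧ Nonempty (NVPartition f l)

/-!
Write `aₖ = f^k_{2,A}(t)` and `bₖ = f^k_{2,B}(t) + (1/4, 0)`. The first coordinates of `a₁ - a₂`
and `b₁ - b₂` are `-1/2`, and for every `aₖ - bₖ'` the second coordinate exceeds the first by
`1/4`; none of these differences lies in `ℤ²`, so the four points are distinct in `T²`.
The tuple `(a₁, a₂, b₁, b₂)` is then a continuous family of configurations on `ℝ²` whose underlying
set is `g(p t) ∪ h(p t)`, hence depends only on `p t`; it therefore descends along the quotient
map `p : ℝ² → T²` to a 4-valued map on `T²`.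
-/

theorem Fin.range_append {α : Type*} {m n : ℕ} (u : Fin m → α) (v : Fin n → α) :
    range (Fin.append u v) = range u ∪ range v := by
  ext x
  constructor
  · rintro ⟨i, rfl⟩
    refine Fin.addCases (fun i => ?_) (fun j => ?_) i <;> simp
  · rintro (⟨i, rfl⟩ | ⟨j, rfl⟩)
    exacts [⟨Fin.castAdd n i, Fin.append_left u v i⟩, ⟨Fin.natAdd m j, Fin.append_right u v j⟩]

namespace UnordConf

variable {n : ℕ} {Y : Type*} [TopologicalSpace Y]

theorem values_injective : Injective (values : UnordConf n Y → Set Y) := by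
  rintro ⟨a⟩ ⟨b⟩ h
  change range a.1 = range b.1 at h
  exact Quotient.sound ⟨(Equiv.ofInjective b.1 b.2).trans
    ((Equiv.setCongr h.symm).trans (Equiv.ofInjective a.1 a.2).symm), by
      funext i
      simp [Equiv.apply_ofInjective_symm]⟩

theorem continuous_mk {X : Type*} [TopologicalSpace X] {F : X → Fin n → Y} (hF : Continuous F)
    (hinj : ∀ x, Injective (F x)) :
    Continuous fun x => (Quotient.mk _ ⟨F x, hinj x⟩ : UnordConf n Y) :=
  continuous_quot_mk.comp (hF.subtype_mk _)

end UnordConf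

theorem exists_nValuedMap_values_eq_of_isQuotientMap {X' X Y : Type*} [TopologicalSpace X']
    [TopologicalSpace X] [TopologicalSpace Y] {n : ℕ} {π : X' → X}
    (hπ : Topology.IsQuotientMap π) {F : X' → Fin n → Y} (hF : Continuous F)
    (hinj : ∀ x', Injective (F x')) (V : X → Set Y) (hV : ∀ x', range (F x') = V (π x')) :
    ∃ f : NValuedMap X Y n, ∀ x, (f x).values = V x := by
  let F' : C(X', UnordConf n Y) := ⟨_, UnordConf.continuous_mk hF hinj⟩
  have hF' (x') : (F' x').values = V (π x') := hV x'
  have hfactor : FactorsThrough F' π := fun x' y' h =>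
    UnordConf.values_injective <| by rw [hF', hF', h]
  refine ⟨hπ.lift (f := ⟨π, hπ.continuous⟩) F' hfactor, hπ.surjective.forall.2 fun x' => ?_⟩
  rw [← hF']
  exact congrArg UnordConf.values
    (DFunLike.congr_fun (hπ.lift_comp (f := ⟨π, hπ.continuous⟩) F' hfactor) x')

theorem isOpenQuotientMap_torusProj (q : ℕ) : IsOpenQuotientMap (torusProj (q := q)) :=
  IsOpenQuotientMap.piMap fun _ => QuotientAddGroup.isOpenQuotientMap_mk

theorem exists_int_sub_eq_of_torusProj_eq {q : ℕ} {u v : Fin q → ℝ}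
    (h : torusProj u = torusProj v) (i : Fin q) : ∃ m : ℤ, u i - v i = m := by
  have hi : ((u i : ℝ) : AddCircle (1 : ℝ)) = v i := congrFun h i
  obtain ⟨m, hm⟩ := AddSubgroup.mem_zmultiples_iff.1 (QuotientAddGroup.eq_iff_sub_mem.1 hi)
  exact ⟨m, by simpa using hm.symm⟩

theorem continuous_linLift {q : ℕ} (n : ℕ) (A : Matrix (Fin q) (Fin q) ℤ) (k : ℤ) :
    Continuous (linLift n A k) := by
  unfold linLift
  fun_prop

theorem linLift_sub_linLift {q : ℕ} (n : ℕ) (A : Matrix (Fin q) (Fin q) ℤ) (k k' : ℤ)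
    (t : Fin q → ℝ) (i : Fin q) : linLift n A k t i - linLift n A k' t i = (k - k') / n := by
  simp only [linLift]
  ring

theorem injective_torusProj_linLift_add {q n : ℕ} [NeZero q] (A : Matrix (Fin q) (Fin q) ℤ)
    (w t : Fin q → ℝ) : Injective fun k : Fin n => torusProj (linLift n A ((k : ℕ) + 1) t + w) := by
  intro k k' h
  obtain ⟨m, hm⟩ := exists_int_sub_eq_of_torusProj_eq h 0
  have hn : (n : ℝ) ≠ 0 := by exact_mod_cast k.pos.ne'
  rw [Pi.add_apply, Pi.add_apply, add_sub_add_right_eq_sub, linLift_sub_linLift,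
    div_eq_iff hn] at hm
  have hm' : (((k : ℤ) - k' : ℤ) : ℝ) = ((n * m : ℤ) : ℝ) := by push_cast at hm ⊢; linarith
  have hdvd : (n : ℤ) ∣ (k : ℤ) - k' := ⟨m, by exact_mod_cast hm'⟩
  have := Int.eq_zero_of_abs_lt_dvd hdvd (abs_sub_lt_iff.2 ⟨by omega, by omega⟩)
  exact Fin.ext (by omega)

open Matrix in
theorem torusProj_linLift_ne_linLift_add (k k' : ℤ) (t : Fin 2 → ℝ) :
    torusProj (linLift 2 !![1, 0; 3, 4] k t) ≠
      torusProj (linLift 2 !![-1, 0; 1, 4] k' t + ![1/4, 0]) := by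
  intro h
  obtain ⟨m₀, h₀⟩ := exists_int_sub_eq_of_torusProj_eq h 0
  obtain ⟨m₁, h₁⟩ := exists_int_sub_eq_of_torusProj_eq h 1
  simp [linLift, mulVec, dotProduct, Fin.sum_univ_two] at h₀ h₁
  have : ((4 * (m₁ - m₀) : ℤ) : ℝ) = 1 := by push_cast; linarith
  have : 4 * (m₁ - m₀) = 1 := by exact_mod_cast this
  omega

open Matrix in
theorem statement_17
    (A : Matrix (Fin 2) (Fin 2) ℤ) (B : Matrix (Fin 2) (Fin 2) ℤ)
    (hA : A = !![1, 0; 3, 4]) (hB : B = !![-1, 0; 1, 4])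
    (w : Fin 2 → ℝ) (hw : w = ![1/4, 0]) :
    (∀ t : Fin 2 → ℝ,
      Function.Injective
        (![torusProj (linLift 2 A 1 t), torusProj (linLift 2 A 2 t),
           torusProj fun i => linLift 2 B 1 t i + w i,
           torusProj fun i => linLift 2 B 2 t i + w i] : Fin 4 → Torus 2)) ∧
    ∀ (g h : NValuedMap (Torus 2) (Torus 2) 2),
      (∀ t : Fin 2 → ℝ,
        UnordConf.values (g (torusProj t)) =
          Set.range fun k : Fin 2 => torusProj (linLift 2 A ((k : ℕ) + 1) t)) →
      (∀ t : Fin 2 → ℝ,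
        UnordConf.values (h (torusProj t)) =
          Set.range fun k : Fin 2 => torusProj fun i => linLift 2 B ((k : ℕ) + 1) t i + w i) →
      (∀ x : Torus 2, UnordConf.values (g x) ∩ UnordConf.values (h x) = ∅) ∧
      ∃ f : NValuedMap (Torus 2) (Torus 2) 4,
        ∀ x : Torus 2,
          UnordConf.values (f x) = UnordConf.values (g x) ∪ UnordConf.values (h x) := by
  let u (t : Fin 2 → ℝ) (k : Fin 2) : Torus 2 := torusProj (linLift 2 A ((k : ℕ) + 1) t)
  let v (t : Fin 2 → ℝ) (k : Fin 2) : Torus 2 := torusProj (linLift 2 B ((k : ℕ) + 1) t + w)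
  have hinj (t) : Injective (Fin.append (u t) (v t)) := by
    subst hA hB hw
    refine Fin.append_injective_iff.2 ⟨?_, injective_torusProj_linLift_add _ _ t,
      fun _ _ => torusProj_linLift_ne_linLift_add _ _ t⟩
    simpa using injective_torusProj_linLift_add (n := 2) !![1, 0; 3, 4] 0 t
  have hcont : Continuous fun t => Fin.append (u t) (v t) := by
    have hp := (isOpenQuotientMap_torusProj 2).continuous
    refine (Fin.continuous_append 2 2).comp (.prodMk ?_ ?_) <;> refine continuous_pi fun k => ?_
    exacts [hp.comp (continuous_linLift _ _ _),
      hp.comp ((continuous_linLift _ _ _).add continuous_const)]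
  have happend (t) : ![u t 0, u t 1, v t 0, v t 1] = Fin.append (u t) (v t) := by
    funext i; fin_cases i <;> rfl
  refine ⟨fun t => happend t ▸ hinj t, fun g h hg hh => ⟨fun x => ?_, ?_⟩⟩
  · obtain ⟨t, rfl⟩ := (isOpenQuotientMap_torusProj 2).surjective x
    rw [hg, hh, ← disjoint_iff_inter_eq_empty, disjoint_range_iff]
    exact (Fin.append_injective_iff.1 (hinj t)).2.2
  · refine exists_nValuedMap_values_eq_of_isQuotientMap
      (isOpenQuotientMap_torusProj 2).isQuotientMap hcont hinj _ fun t => ?_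
    rw [Fin.range_append]
    exact (congrArg₂ _ (hg t) (hh t)).symm
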